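/- With μ = Σ_{i≥1} (i+1) i f^{i-1} ⊗ θ^i (where θ^i is dual to e_i and f^j = x^j dx), one has for all p, q ≥ 1: μ([e_p, e_q]) - e_p · μ(e_q) + e_q · μ(e_p) = 0, so μ is annihilated by the Chevalley–Eilenberg coboundary restricted to the subalgebra spanned by {e_i : i ≥ 1}. -/
import Mathlib


/-- The basis 1-form `f^j = x^j dx` of `Ω¹₁`, encoded as the coefficient sequence `ℕ → ℝ`. -/
noncomputable def fBasis (j : ℕ) : ℕ → ℝ := fun k => if k = j then 1 else 0

/-- The action of `e_p` (`p ≥ 1`) on `Ω¹₁` determined by `e_i · f^j = (i + j + 1) f^{i+j}`. -/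
noncomputable def eAct (p : ℕ) (v : ℕ → ℝ) : ℕ → ℝ :=
  fun k => if p ≤ k then ((k : ℝ) + 1) * v (k - p) else 0

/-- The cochain `μ` on `n = span{e_i : i ≥ 1}`, with `μ(e_i) = (i+1) i f^{i-1}`. -/
noncomputable def muCochain (i : ℕ) : ℕ → ℝ := (((i : ℝ) + 1) * (i : ℝ)) • fBasis (i - 1)

/-- With `μ = Σ_{i≥1} (i+1) i f^{i-1} ⊗ θ^i`, the Chevalley–Eilenberg
coboundary restricted to the subalgebra spanned by `{e_i : i ≥ 1}` annihilates `μ`: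
for all `p, q ≥ 1`,
`μ([e_p, e_q]) - e_p · μ(e_q) + e_q · μ(e_p) = 0`, i.e.
`(q-p) μ(e_{p+q}) - e_p · μ(e_q) + e_q · μ(e_p) = 0`, which amounts to the coefficient
identity `(q-p)(p+q+1)(p+q) - (q+1)q(p+q) + (p+1)p(p+q) = 0` on `f^{p+q-1}`. -/
theorem mu_closed (p q : ℕ) (hp : 1 ≤ p) (hq : 1 ≤ q) :
    ((q : ℝ) - (p : ℝ)) • muCochain (p + q) - eAct p (muCochain q) + eAct q (muCochain p)
      = 0 := by
  funext k
  simp only [muCochain, eAct, fBasis, Pi.add_apply, Pi.sub_apply, Pi.smul_apply,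
    smul_eq_mul, Pi.zero_apply]
  by_cases h : k = p + q - 1
  · subst h
    have h1 : p ≤ p + q - 1 := by omega
    have h2 : q ≤ p + q - 1 := by omega
    have h3 : p + q - 1 - p = q - 1 := by omega
    have h4 : p + q - 1 - q = p - 1 := by omega
    have h5 : p + q - 1 = p + q - 1 := rfl
    rw [if_pos h1, if_pos h2, if_pos h5, h3, h4, if_pos rfl, if_pos rfl]
    have hc : ((p + q - 1 : ℕ) : ℝ) = (p : ℝ) + (q : ℝ) - 1 := by
      push_cast [Nat.cast_sub (by omega : 1 ≤ p + q)]; ring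
    rw [hc]
    push_cast
    ring
  · have h1 : ¬ (k - p = q - 1) ∨ ¬ (p ≤ k) := by omega
    have h2 : ¬ (k - q = p - 1) ∨ ¬ (q ≤ k) := by omega
    have h3 : k ≠ p + q - 1 := h
    rw [if_neg h3]
    rcases h1 with h1 | h1 <;> rcases h2 with h2 | h2 <;>
      simp [h1, h2]
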